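/- Let R be a commutative ring, n a natural number, and let a, u, c, κ, t ∈ R satisfy a * a = 0, u^(n+1) = 0, and u = κ * c + t * a. Then for every natural number L with 1 ≤ L ≤ n + 1 one has κ^L * (c^L * u^(n+1-L)) = -(L • (t * (κ^n * (a * c^n)))), where L • z denotes the L-fold sum of z. -/
import Mathlib

private lemma aux_pow_sq_zero {R : Type*} [CommRing R] (x y : R) (hy : y * y = 0) :
    ∀ m : ℕ, (x + y) ^ (m + 1) = x ^ (m + 1) + ((m : R) + 1) * (y * x ^ m) := by
  intro m
  induction m with
  | zero => push_cast; ring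
  | succ k ih =>
    have : (x + y) ^ (k + 1 + 1) = (x + y) ^ (k + 1) * (x + y) := by ring
    rw [this, ih]
    push_cast
    linear_combination (((k : R) + 1) * x ^ k) * hy

private lemma aux_a_pow {R : Type*} [CommRing R] (a u c κ t : R)
    (ha : a * a = 0) (hu : u = κ * c + t * a) :
    ∀ m : ℕ, a * u ^ m = a * (κ * c) ^ m := by
  have hau : a * u = a * (κ * c) := by linear_combination a * hu + t * ha
  intro m
  induction m with
  | zero => simp
  | succ k ih =>
    calc a * u ^ (k + 1) = (a * u ^ k) * u := by ring
      _ = (a * (κ * c) ^ k) * u := by rw [ih]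
      _ = (κ * c) ^ k * (a * u) := by ring
      _ = (κ * c) ^ k * (a * (κ * c)) := by rw [hau]
      _ = a * (κ * c) ^ (k + 1) := by ring

/-- Algebraic content of Computation 1.13: if `a * a = 0`, `u^(n+1) = 0` and
`u = κ * c + t * a`, then for `1 ≤ L ≤ n + 1`,
`κ^L * (c^L * u^(n+1-L)) = -(L • (t * (κ^n * (a * c^n))))`. -/
theorem proportionality_identity {R : Type*} [CommRing R] (n : ℕ) (a u c κ t : R)
    (ha : a * a = 0) (hun : u ^ (n + 1) = 0) (hu : u = κ * c + t * a) :
    ∀ L : ℕ, 1 ≤ L → L ≤ n + 1 →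
      κ ^ L * (c ^ L * u ^ (n + 1 - L)) = -(L • (t * (κ ^ n * (a * c ^ n)))) := by
  intro L hL1 hL2
  obtain ⟨K, rfl⟩ : ∃ K, L = K + 1 := ⟨L - 1, by omega⟩
  have hkc : κ * c = u + (-(t * a)) := by rw [hu]; ring
  have hy : (-(t * a)) * (-(t * a)) = 0 := by linear_combination (t * t) * ha
  have h1 := aux_pow_sq_zero u (-(t * a)) hy K
  have h2 := aux_a_pow a u c κ t ha hu n
  have hsplit : u ^ (K + 1) * u ^ (n - K) = u ^ (n + 1) := by
    rw [← pow_add]; congr 1; omega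
  have hsplit2 : u ^ K * u ^ (n - K) = u ^ n := by
    rw [← pow_add]; congr 1; omega
  simp only [nsmul_eq_mul]
  push_cast
  calc κ ^ (K + 1) * (c ^ (K + 1) * u ^ (n - K))
      = (κ * c) ^ (K + 1) * u ^ (n - K) := by ring
    _ = (u ^ (K + 1) + ((K : R) + 1) * ((-(t * a)) * u ^ K)) * u ^ (n - K) := by
        rw [hkc, h1]
    _ = u ^ (K + 1) * u ^ (n - K)
        - ((K : R) + 1) * (t * (a * (u ^ K * u ^ (n - K)))) := by ring
    _ = -(((K : R) + 1) * (t * (κ ^ n * (a * c ^ n)))) := by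
        rw [hsplit, hsplit2, hun, h2]; ring
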